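/- Let f be an isometric embedding of the Johnson graph J(l,m) into the Grassmann graph Γ_k(V), with 1 < m < l-1 and 1 < k < n-1. Then every maximal clique of the induced subgraph on the image of f is contained in exactly one maximal clique of Γ_k(V). -/

import Mathlib

open Module

/-- The Grassmann graph `Γ_k(V)`. -/
def GrassmannGraph (K V : Type*) [DivisionRing K] [AddCommGroup V] [Module K V] (k : ℕ) :
    SimpleGraph {S : Submodule K V // finrank K S = k} where
  Adj S U := S ≠ U ∧ finrank K ↥(S.1 ⊓ U.1) = k - 1
  symm := by
    constructor
    rintro S U ⟨h1, h2⟩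
    refine ⟨h1.symm, ?_⟩
    rwa [inf_comm]
  loopless := by constructor; rintro S ⟨h, -⟩; exact h rfl

/-- The Johnson graph `J(l,m)`. -/
def JohnsonGraph (l m : ℕ) : SimpleGraph {A : Finset (Fin l) // A.card = m} where
  Adj A B := A ≠ B ∧ (A.1 ∩ B.1).card = m - 1
  symm := by
    constructor
    rintro A B ⟨h1, h2⟩
    refine ⟨h1.symm, ?_⟩
    rwa [Finset.inter_comm]
  loopless := by constructor; rintro A ⟨h, -⟩; exact h rfl

/-!
An isometric embedding `f` is a graph embedding, so `f⁻¹ C` is a maximal clique of `J(l,m)`. Two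
adjacent members `A₁, A₂` of it have two non-adjacent common neighbours, and maximality then yields
a third member `A₃` and a common neighbour `W` of `A₁, A₂` that is neither equal nor adjacent to
`A₃`. In `Γ_k(V)`, every common neighbour of `S₁ = f A₁` and `S₂ = f A₂` lies in the star of
`S₁ ⊓ S₂` or in the top of `S₁ ⊔ S₂`, and both are cliques; so `f W` keeps `S₃ = f A₃` off the line
where they meet. Then `S₃` lies in exactly one of them, and this star or top contains every maximal
clique through `C`, hence equals it.
-/

namespace SimpleGraph

variable {α β : Type*} {G : SimpleGraph α} {H : SimpleGraph β}

theorem exists_maximal_isClique_superset {s : Set α} (hs : G.IsClique s) :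
    ∃ M, s ⊆ M ∧ Maximal G.IsClique M := by
  have hchain : ∀ {t : Set α}, IsChain G.Adj t ↔ G.IsClique t :=
    ⟨Set.Pairwise.mono' fun _ _ h => h.elim id Adj.symm, Set.Pairwise.mono' fun _ _ => Or.inl⟩
  obtain ⟨M, ⟨hM, hMmax⟩, hsM⟩ := (hchain.2 hs).exists_maxChain
  exact ⟨M, hsM, maximal_subset_iff.2 ⟨hchain.1 hM, fun t ht hMt => hMmax (hchain.2 ht) hMt⟩⟩

section MaximalClique

variable {D : Set α}

theorem exists_mem_not_adj_of_maximal_isClique (hD : Maximal G.IsClique D) {v : α}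
    (hv : v ∉ D) : ∃ w ∈ D, w ≠ v ∧ ¬G.Adj v w := by
  by_contra! h
  exact hv (hD.2 (isClique_insert.2 ⟨hD.1, fun w hw hvw => h w hw hvw.symm⟩)
    (Set.subset_insert v D) (Set.mem_insert v D))

theorem nonempty_of_maximal_isClique [Nonempty α] (hD : Maximal G.IsClique D) : D.Nonempty := by
  obtain ⟨v⟩ := ‹Nonempty α›
  by_cases hv : v ∈ D
  · exact ⟨v, hv⟩
  · obtain ⟨w, hw, -⟩ := exists_mem_not_adj_of_maximal_isClique hD hv
    exact ⟨w, hw⟩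

theorem exists_mem_ne_of_maximal_isClique (hD : Maximal G.IsClique D) {u v : α}
    (huv : G.Adj u v) : ∃ w ∈ D, w ≠ v := by
  by_cases hu : u ∈ D
  · exact ⟨u, hu, huv.ne⟩
  · obtain ⟨w, hw, -, hnadj⟩ := exists_mem_not_adj_of_maximal_isClique hD hu
    exact ⟨w, hw, fun h => hnadj (h ▸ huv)⟩

theorem exists_mem_separated_of_maximal_isClique (hD : Maximal G.IsClique D) {p q : α}
    (hpq : p ≠ q) (hpq' : ¬G.Adj p q) : ∃ a ∈ D, ∃ w ∈ ({p, q} : Set α), w ≠ a ∧ ¬G.Adj w a := by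
  by_cases hp : p ∈ D
  · exact ⟨p, hp, q, Or.inr rfl, hpq.symm, fun h => hpq' h.symm⟩
  · obtain ⟨a, ha, hap, hnadj⟩ := exists_mem_not_adj_of_maximal_isClique hD hp
    exact ⟨a, ha, p, Or.inl rfl, hap.symm, hnadj⟩

end MaximalClique

def Embedding.ofDistEq (hG : G.Preconnected) {f : α → β}
    (hf : ∀ a b, H.dist (f a) (f b) = G.dist a b) : G ↪g H where
  toFun := f
  inj' := fun a b hab => (hG a b).dist_eq_zero_iff.1 (by rw [← hf, hab, dist_self])
  map_rel_iff' := by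
    intro a b
    change H.Adj (f a) (f b) ↔ G.Adj a b
    rw [← dist_eq_one_iff_adj, ← dist_eq_one_iff_adj, hf]

theorem Embedding.maximal_isClique_preimage (φ : G ↪g H) {C : Set β}
    (hC : Maximal (fun D => D ⊆ Set.range φ ∧ H.IsClique D) C) :
    Maximal G.IsClique (φ ⁻¹' C) := by
  refine ⟨fun a ha b hb hab => φ.map_adj_iff.1 (hC.1.2 ha hb (φ.injective.ne hab)),
    fun D hD hCD => ?_⟩
  have hDφ : H.IsClique (φ '' D) := by
    rintro _ ⟨a, ha, rfl⟩ _ ⟨b, hb, rfl⟩ hab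
    exact φ.map_adj_iff.2 (hD ha hb (ne_of_apply_ne φ hab))
  have hCD' : C ⊆ φ '' D := fun c hc => by
    obtain ⟨a, rfl⟩ := hC.1.1 hc
    exact ⟨a, hCD hc, rfl⟩
  exact fun a ha => hC.2 ⟨Set.image_subset_range _ _, hDφ⟩ hCD' ⟨a, ha, rfl⟩

end SimpleGraph

namespace JohnsonGraph

open Finset

variable {l m : ℕ}

theorem adj_of_card_inter {A B : {A : Finset (Fin l) // A.card = m}} (hm : 0 < m)
    (h : (A.1 ∩ B.1).card = m - 1) : (JohnsonGraph l m).Adj A B := by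
  refine ⟨fun hAB => ?_, h⟩
  rw [hAB, inter_self, B.2] at h
  omega

def exchange (A : {A : Finset (Fin l) // A.card = m}) {a b : Fin l} (ha : a ∈ A.1)
    (hb : b ∉ A.1) : {A : Finset (Fin l) // A.card = m} :=
  ⟨insert b (A.1.erase a), by
    rw [card_insert_of_notMem fun h => hb (mem_of_mem_erase h), card_erase_of_mem ha, A.2]
    have := A.2 ▸ card_pos.2 ⟨a, ha⟩
    omega⟩

theorem adj_exchange (A : {A : Finset (Fin l) // A.card = m}) {a b : Fin l} (ha : a ∈ A.1)
    (hb : b ∉ A.1) : (JohnsonGraph l m).Adj A (exchange A ha hb) := by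
  have hm : 0 < m := A.2 ▸ card_pos.2 ⟨a, ha⟩
  refine adj_of_card_inter hm ?_
  change (A.1 ∩ insert b (A.1.erase a)).card = m - 1
  rw [inter_insert_of_notMem hb, inter_erase, inter_self, card_erase_of_mem ha, A.2]

theorem preconnected : (JohnsonGraph l m).Preconnected := by
  rintro ⟨A, hA⟩ ⟨B, hB⟩
  induction hd : (A \ B).card generalizing A with
  | zero =>
    have hAB : A = B := eq_of_subset_of_card_le (sdiff_eq_empty_iff_subset.1 (card_eq_zero.1 hd))
      (by rw [hA, hB])
    subst hAB
    rfl
  | succ d ih =>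
    obtain ⟨a, ha⟩ : (A \ B).Nonempty := by rw [← card_pos, hd]; omega
    obtain ⟨b, hb⟩ : (B \ A).Nonempty := by
      rw [← card_pos, ← card_sdiff_comm (hA.trans hB.symm), hd]; omega
    have haA := (mem_sdiff.1 ha).1
    have hbA := (mem_sdiff.1 hb).2
    refine (adj_exchange ⟨A, hA⟩ haA hbA).reachable.trans (ih _ _ ?_)
    change (insert b (A.erase a) \ B).card = d
    rw [insert_sdiff_of_mem _ (mem_sdiff.1 hb).1, erase_sdiff_comm, card_erase_of_mem ha, hd]
    rfl

theorem exists_adj (hm : 0 < m) (hml : m < l) (A : {A : Finset (Fin l) // A.card = m}) :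
    ∃ B, (JohnsonGraph l m).Adj B A := by
  obtain ⟨a, ha⟩ : A.1.Nonempty := by rw [← card_pos, A.2]; exact hm
  obtain ⟨b, hb⟩ : A.1ᶜ.Nonempty := by rw [← card_pos, card_compl, A.2, Fintype.card_fin]; omega
  exact ⟨_, (adj_exchange A ha (mem_compl.1 hb)).symm⟩

theorem nonempty_vertex (h : m ≤ l) : Nonempty {A : Finset (Fin l) // A.card = m} := by
  obtain ⟨A, -, hA⟩ := exists_subset_card_eq (s := (univ : Finset (Fin l))) (by simpa using h)
  exact ⟨⟨A, hA⟩⟩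

/-- With `M = A₁ ∩ A₂` and `N = A₁ ∪ A₂`, take `P = M ∪ {z}` for `z ∉ N` and `Q = N \ {y}` for
`y ∈ M`; they meet in `M \ {y}`. -/
theorem exists_common_neighbors (hm : 2 ≤ m) (hml : m + 2 ≤ l)
    {A₁ A₂ : {A : Finset (Fin l) // A.card = m}} (h : (JohnsonGraph l m).Adj A₁ A₂) :
    ∃ P Q, P ≠ Q ∧ ¬(JohnsonGraph l m).Adj P Q ∧ ∀ W ∈ ({P, Q} : Set _),
      (JohnsonGraph l m).Adj W A₁ ∧ (JohnsonGraph l m).Adj W A₂ := by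
  set M := A₁.1 ∩ A₂.1 with hM
  set N := A₁.1 ∪ A₂.1 with hN
  have hMcard : M.card = m - 1 := h.2
  have hNcard : N.card = m + 1 := by
    have := card_union_add_card_inter A₁.1 A₂.1
    rw [A₁.2, A₂.2, ← hM, ← hN, hMcard] at this
    omega
  obtain ⟨y, hy⟩ : M.Nonempty := by rw [← card_pos, hMcard]; omega
  obtain ⟨z, hz⟩ : Nᶜ.Nonempty := by rw [← card_pos, card_compl, hNcard, Fintype.card_fin]; omega
  have hzN := mem_compl.1 hz
  have hyN : y ∈ N := inter_subset_union hy
  have hzM : z ∉ M := fun h => hzN (inter_subset_union h)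
  let P : {A : Finset (Fin l) // A.card = m} :=
    ⟨insert z M, by rw [card_insert_of_notMem hzM, hMcard]; omega⟩
  let Q : {A : Finset (Fin l) // A.card = m} :=
    ⟨N.erase y, by rw [card_erase_of_mem hyN, hNcard]; rfl⟩
  have hPQ : (P.1 ∩ Q.1).card = m - 2 := by
    change (insert z M ∩ N.erase y).card = m - 2
    rw [insert_inter_of_notMem fun h => hzN (mem_of_mem_erase h), inter_erase,
      inter_eq_left.2 inter_subset_union, card_erase_of_mem hy, hMcard]
    rfl
  refine ⟨P, Q, fun hPQ' => ?_, fun hadj => ?_, ?_⟩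
  · rw [hPQ', inter_self, Q.2] at hPQ
    omega
  · have := hadj.2
    omega
  rintro W (rfl | rfl) <;> constructor <;> refine adj_of_card_inter (by omega) ?_
  · change (insert z M ∩ A₁.1).card = m - 1
    rw [insert_inter_of_notMem fun h => hzN (mem_union_left _ h),
      inter_eq_left.2 inter_subset_left, hMcard]
  · change (insert z M ∩ A₂.1).card = m - 1
    rw [insert_inter_of_notMem fun h => hzN (mem_union_right _ h),
      inter_eq_left.2 inter_subset_right, hMcard]
  · change (N.erase y ∩ A₁.1).card = m - 1
    rw [erase_inter, inter_eq_right.2 subset_union_left, card_erase_of_mem (mem_inter.1 hy).1,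
      A₁.2]
  · change (N.erase y ∩ A₂.1).card = m - 1
    rw [erase_inter, inter_eq_right.2 subset_union_right, card_erase_of_mem (mem_inter.1 hy).2,
      A₂.2]

end JohnsonGraph

namespace GrassmannGraph

variable {K V : Type*} [DivisionRing K] [AddCommGroup V] [Module K V] {k : ℕ}

def star (k : ℕ) (X : Submodule K V) : Set {S : Submodule K V // finrank K S = k} :=
  {S | X ≤ S.1}

def top (k : ℕ) (Y : Submodule K V) : Set {S : Submodule K V // finrank K S = k} :=
  {S | S.1 ≤ Y}

@[simp]
theorem mem_star {X : Submodule K V} {S : {S : Submodule K V // finrank K S = k}} :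
    S ∈ star k X ↔ X ≤ S.1 :=
  Iff.rfl

@[simp]
theorem mem_top {Y : Submodule K V} {S : {S : Submodule K V // finrank K S = k}} :
    S ∈ top k Y ↔ S.1 ≤ Y :=
  Iff.rfl

variable [FiniteDimensional K V] {S₁ S₂ S₃ T : {S : Submodule K V // finrank K S = k}}

theorem eq_of_le_of_le_of_finrank_le {Y : Submodule K V} (h₁ : S₁.1 ≤ Y) (h₂ : S₂.1 ≤ Y)
    (hY : finrank K Y ≤ k) : S₁ = S₂ :=
  Subtype.ext <| (Submodule.eq_of_le_of_finrank_le h₁ (hY.trans S₁.2.ge)).trans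
    (Submodule.eq_of_le_of_finrank_le h₂ (hY.trans S₂.2.ge)).symm

theorem eq_of_ge_of_ge_of_le_finrank {X : Submodule K V} (h₁ : X ≤ S₁.1) (h₂ : X ≤ S₂.1)
    (hX : k ≤ finrank K X) : S₁ = S₂ :=
  Subtype.ext <| (Submodule.eq_of_le_of_finrank_le h₁ (S₁.2.trans_le hX)).symm.trans
    (Submodule.eq_of_le_of_finrank_le h₂ (S₂.2.trans_le hX))

theorem finrank_inf_lt_of_ne (h : S₁ ≠ S₂) : finrank K ↥(S₁.1 ⊓ S₂.1) < k :=
  (Submodule.finrank_lt_finrank_of_lt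
    (inf_lt_left.2 fun hle => h (eq_of_ge_of_ge_of_le_finrank le_rfl hle S₁.2.ge))).trans_eq S₁.2

theorem eq_or_adj_of_le_finrank_inf (h : k - 1 ≤ finrank K ↥(S₁.1 ⊓ S₂.1)) :
    S₁ = S₂ ∨ (GrassmannGraph K V k).Adj S₁ S₂ := by
  refine or_iff_not_imp_left.2 fun hne => ⟨hne, ?_⟩
  have := finrank_inf_lt_of_ne hne
  omega

theorem finrank_sup_of_adj (h : (GrassmannGraph K V k).Adj S₁ S₂) :
    finrank K ↥(S₁.1 ⊔ S₂.1) = k + 1 := by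
  have := Submodule.finrank_sup_add_finrank_inf_eq S₁.1 S₂.1
  have := finrank_inf_lt_of_ne h.1
  rw [h.2, S₁.2, S₂.2] at *
  omega

theorem isClique_star {X : Submodule K V} (hX : finrank K X = k - 1) :
    (GrassmannGraph K V k).IsClique (star k X) := by
  intro S₁ h₁ S₂ h₂ hne
  refine (eq_or_adj_of_le_finrank_inf ?_).resolve_left hne
  exact hX ▸ Submodule.finrank_mono (le_inf (show X ≤ S₁.1 from h₁) h₂)

theorem isClique_top {Y : Submodule K V} (hY : finrank K Y = k + 1) :
    (GrassmannGraph K V k).IsClique (top k Y) := by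
  intro S₁ h₁ S₂ h₂ hne
  refine (eq_or_adj_of_le_finrank_inf ?_).resolve_left hne
  have := Submodule.finrank_sup_add_finrank_inf_eq S₁.1 S₂.1
  have := Submodule.finrank_mono (sup_le (show S₁.1 ≤ Y from h₁) h₂)
  rw [S₁.2, S₂.2, hY] at *
  omega

/-- By inclusion–exclusion for the hyperplanes `T ⊓ S₁` and `T ⊓ S₂` of `T`, either their meet
`T ⊓ S₁ ⊓ S₂` is all of `S₁ ⊓ S₂`, or they span `T`. -/
theorem mem_star_or_mem_top (hT₁ : (GrassmannGraph K V k).Adj T S₁)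
    (hT₂ : (GrassmannGraph K V k).Adj T S₂) (h₁₂ : (GrassmannGraph K V k).Adj S₁ S₂) :
    T ∈ star k (S₁.1 ⊓ S₂.1) ∨ T ∈ top k (S₁.1 ⊔ S₂.1) := by
  refine or_iff_not_imp_left.2 fun hX => ?_
  have hmeet := Submodule.finrank_lt_finrank_of_lt (inf_lt_right.2 hX)
  have hsum := Submodule.finrank_sup_add_finrank_inf_eq (T.1 ⊓ S₁.1) (T.1 ⊓ S₂.1)
  rw [← inf_inf_distrib_left, hT₁.2, hT₂.2] at hsum
  rw [h₁₂.2] at hmeet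
  have hspan : (T.1 ⊓ S₁.1) ⊔ (T.1 ⊓ S₂.1) = T.1 :=
    Submodule.eq_of_le_of_finrank_le (sup_le inf_le_left inf_le_left) (by rw [T.2]; omega)
  change T.1 ≤ S₁.1 ⊔ S₂.1
  rw [← hspan]
  exact sup_le_sup inf_le_right inf_le_right

theorem not_mem_star_and_mem_top (h₁₂ : (GrassmannGraph K V k).Adj S₁ S₂)
    (hT₁ : (GrassmannGraph K V k).Adj T S₁) (hT₂ : (GrassmannGraph K V k).Adj T S₂)
    (hT₃ : T ≠ S₃) (hT₃' : ¬(GrassmannGraph K V k).Adj T S₃) :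
    ¬(S₃ ∈ star k (S₁.1 ⊓ S₂.1) ∧ S₃ ∈ top k (S₁.1 ⊔ S₂.1)) := by
  rintro ⟨hstar, htop⟩
  rcases mem_star_or_mem_top hT₁ hT₂ h₁₂ with hT | hT
  · exact hT₃' (isClique_star h₁₂.2 hT hstar hT₃)
  · exact hT₃' (isClique_top (finrank_sup_of_adj h₁₂) hT htop hT₃)

section Clique

variable {D : Set {S : Submodule K V // finrank K S = k}}

/-- A vertex of `D` outside `star (S₁ ⊓ S₂)` lies in `top (S₁ ⊔ S₂) ⊓ top (S₁ ⊔ S₃) = top S₁`. -/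
theorem subset_star (hD : (GrassmannGraph K V k).IsClique D) (h₁ : S₁ ∈ D) (h₂ : S₂ ∈ D)
    (h₃ : S₃ ∈ D) (h₁₂ : S₁ ≠ S₂) (hstar : S₃ ∈ star k (S₁.1 ⊓ S₂.1))
    (htop : S₃ ∉ top k (S₁.1 ⊔ S₂.1)) :
    D ⊆ star k (S₁.1 ⊓ S₂.1) := by
  intro T hT
  have a₁₂ := hD h₁ h₂ h₁₂
  have a₁₃ := hD h₁ h₃ (by rintro rfl; exact htop (mem_top.2 le_sup_left))
  by_cases hT₁ : T = S₁
  · exact hT₁ ▸ mem_star.2 inf_le_left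
  by_cases hT₂ : T = S₂
  · exact hT₂ ▸ mem_star.2 inf_le_right
  by_cases hT₃ : T = S₃
  · exact hT₃ ▸ hstar
  have aT₁ := hD hT h₁ hT₁
  rcases mem_star_or_mem_top aT₁ (hD hT h₂ hT₂) a₁₂ with hX | hY
  · exact hX
  rcases mem_star_or_mem_top aT₁ (hD hT h₃ hT₃) a₁₃ with hX' | hY'
  · have hX : S₁.1 ⊓ S₂.1 = S₁.1 ⊓ S₃.1 :=
      Submodule.eq_of_le_of_finrank_eq (le_inf inf_le_left hstar) (a₁₂.2.trans a₁₃.2.symm)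
    change S₁.1 ⊓ S₂.1 ≤ T.1
    rw [hX]
    exact hX'
  have hYY' : ¬S₁.1 ⊔ S₂.1 ≤ S₁.1 ⊔ S₃.1 := fun hle => htop <| by
    change S₃.1 ≤ S₁.1 ⊔ S₂.1
    rw [Submodule.eq_of_le_of_finrank_eq hle
      (by rw [finrank_sup_of_adj a₁₂, finrank_sup_of_adj a₁₃])]
    exact le_sup_right
  have := Submodule.finrank_lt_finrank_of_lt (inf_lt_left.2 hYY')
  rw [finrank_sup_of_adj a₁₂] at this
  exact absurd (eq_of_le_of_le_of_finrank_le (le_inf hY hY') (le_inf le_sup_left le_sup_left)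
    (by omega)) hT₁

/-- A vertex of `D` outside `top (S₁ ⊔ S₂)` lies in `star (S₁ ⊓ S₂) ⊓ star (S₁ ⊓ S₃) = star S₁`. -/
theorem subset_top (hD : (GrassmannGraph K V k).IsClique D) (h₁ : S₁ ∈ D) (h₂ : S₂ ∈ D)
    (h₃ : S₃ ∈ D) (h₁₂ : S₁ ≠ S₂) (htop : S₃ ∈ top k (S₁.1 ⊔ S₂.1))
    (hstar : S₃ ∉ star k (S₁.1 ⊓ S₂.1)) :
    D ⊆ top k (S₁.1 ⊔ S₂.1) := by
  intro T hT
  have a₁₂ := hD h₁ h₂ h₁₂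
  have a₁₃ := hD h₁ h₃ (by rintro rfl; exact hstar (mem_star.2 inf_le_left))
  by_cases hT₁ : T = S₁
  · exact hT₁ ▸ mem_top.2 le_sup_left
  by_cases hT₂ : T = S₂
  · exact hT₂ ▸ mem_top.2 le_sup_right
  by_cases hT₃ : T = S₃
  · exact hT₃ ▸ htop
  have aT₁ := hD hT h₁ hT₁
  rcases mem_star_or_mem_top aT₁ (hD hT h₂ hT₂) a₁₂ with hX | hY
  swap
  · exact hY
  rcases mem_star_or_mem_top aT₁ (hD hT h₃ hT₃) a₁₃ with hX' | hY'
  swap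
  · have hY : S₁.1 ⊔ S₃.1 = S₁.1 ⊔ S₂.1 :=
      Submodule.eq_of_le_of_finrank_eq (sup_le le_sup_left htop)
        (by rw [finrank_sup_of_adj a₁₃, finrank_sup_of_adj a₁₂])
    change T.1 ≤ S₁.1 ⊔ S₂.1
    rw [← hY]
    exact hY'
  have hXX' : ¬S₁.1 ⊓ S₃.1 ≤ S₁.1 ⊓ S₂.1 := fun hle => hstar <| by
    change S₁.1 ⊓ S₂.1 ≤ S₃.1
    rw [← Submodule.eq_of_le_of_finrank_eq hle (by rw [a₁₃.2, a₁₂.2])]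
    exact inf_le_right
  have := Submodule.finrank_lt_finrank_of_lt (left_lt_sup.2 hXX')
  rw [a₁₂.2] at this
  exact absurd (eq_of_ge_of_ge_of_le_finrank (sup_le hX hX') (sup_le inf_le_left inf_le_left)
    (by omega)) hT₁

end Clique

/-- `T` certifies that `S₁, S₂, S₃` are not on a line, so `S₃` lies in exactly one of
`star (S₁ ⊓ S₂)` and `top (S₁ ⊔ S₂)`, and every maximal clique through `C` is that one. -/
theorem existsUnique_maximal_isClique_superset {C : Set {S : Submodule K V // finrank K S = k}}
    (hC : (GrassmannGraph K V k).IsClique C) (h₁ : S₁ ∈ C) (h₂ : S₂ ∈ C) (h₃ : S₃ ∈ C)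
    (h₁₂ : S₁ ≠ S₂) (hT₁ : (GrassmannGraph K V k).Adj T S₁)
    (hT₂ : (GrassmannGraph K V k).Adj T S₂) (hT₃ : T ≠ S₃)
    (hT₃' : ¬(GrassmannGraph K V k).Adj T S₃) :
    ∃! D, Maximal (GrassmannGraph K V k).IsClique D ∧ C ⊆ D := by
  have a₁₂ := hC h₁ h₂ h₁₂
  have hline := not_mem_star_and_mem_top a₁₂ hT₁ hT₂ hT₃ hT₃'
  obtain ⟨D₀, hD₀⟩ : ∃ D₀, ∀ D, Maximal (GrassmannGraph K V k).IsClique D → C ⊆ D → D = D₀ := by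
    rcases mem_star_or_mem_top (hC h₃ h₁ fun h => hT₃' (h ▸ hT₁))
      (hC h₃ h₂ fun h => hT₃' (h ▸ hT₂)) a₁₂ with hstar | htop
    · exact ⟨_, fun D hD hCD => hD.eq_of_subset (isClique_star a₁₂.2) <|
        subset_star hD.1 (hCD h₁) (hCD h₂) (hCD h₃) h₁₂ hstar fun htop => hline ⟨hstar, htop⟩⟩
    · exact ⟨_, fun D hD hCD => hD.eq_of_subset (isClique_top (finrank_sup_of_adj a₁₂)) <|
        subset_top hD.1 (hCD h₁) (hCD h₂) (hCD h₃) h₁₂ htop fun hstar => hline ⟨hstar, htop⟩⟩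
  obtain ⟨D, hCD, hD⟩ := SimpleGraph.exists_maximal_isClique_superset hC
  exact ⟨D, ⟨hD, hCD⟩, fun D' hD' => (hD₀ D' hD'.1 hD'.2).trans (hD₀ D hD hCD).symm⟩

end GrassmannGraph

theorem stmt12_general (K V : Type*) [DivisionRing K] [AddCommGroup V] [Module K V]
    [FiniteDimensional K V] (k l m : ℕ)
    (hm1 : 1 < m) (hm2 : m < l - 1)
    (f : {A : Finset (Fin l) // A.card = m} → {S : Submodule K V // finrank K S = k})
    (hf : ∀ A B, (GrassmannGraph K V k).dist (f A) (f B) = (JohnsonGraph l m).dist A B)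
    (C : Set {S : Submodule K V // finrank K S = k})
    (hCsub : C ⊆ Set.range f)
    (hC : (GrassmannGraph K V k).IsClique C)
    (hCmax : ∀ D, D ⊆ Set.range f → (GrassmannGraph K V k).IsClique D → C ⊆ D → C = D) :
    ∃! D : Set {S : Submodule K V // finrank K S = k},
      (GrassmannGraph K V k).IsClique D ∧
      (∀ E, (GrassmannGraph K V k).IsClique E → D ⊆ E → D = E) ∧
      C ⊆ D := by
  let φ := SimpleGraph.Embedding.ofDistEq JohnsonGraph.preconnected hf
  have hD : Maximal (JohnsonGraph l m).IsClique (φ ⁻¹' C) := φ.maximal_isClique_preimage <|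
    maximal_subset_iff.2 ⟨⟨hCsub, hC⟩, fun D hD hCD => hCmax D hD.1 hD.2 hCD⟩
  have : Nonempty {A : Finset (Fin l) // A.card = m} := JohnsonGraph.nonempty_vertex (by omega)
  obtain ⟨A₁, hA₁⟩ := SimpleGraph.nonempty_of_maximal_isClique hD
  obtain ⟨B, hB⟩ := JohnsonGraph.exists_adj (by omega) (by omega) A₁
  obtain ⟨A₂, hA₂, hA₂₁⟩ := SimpleGraph.exists_mem_ne_of_maximal_isClique hD hB
  obtain ⟨P, Q, hPQ, hPQ', hPQ₁₂⟩ :=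
    JohnsonGraph.exists_common_neighbors (by omega) (by omega) (hD.1 hA₁ hA₂ hA₂₁.symm)
  obtain ⟨A₃, hA₃, W, hW, hW₃, hW₃'⟩ :=
    SimpleGraph.exists_mem_separated_of_maximal_isClique hD hPQ hPQ'
  have := GrassmannGraph.existsUnique_maximal_isClique_superset hC hA₁ hA₂ hA₃
    (φ.injective.ne hA₂₁.symm) (φ.map_adj_iff.2 (hPQ₁₂ W hW).1) (φ.map_adj_iff.2 (hPQ₁₂ W hW).2)
    (φ.injective.ne hW₃) (mt φ.map_adj_iff.1 hW₃')
  simpa only [maximal_subset_iff, and_assoc] using this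

theorem stmt12 (K V : Type*) [DivisionRing K] [AddCommGroup V] [Module K V]
    [FiniteDimensional K V] (n k l m : ℕ) (hn : finrank K V = n)
    (hn4 : 4 ≤ n) (hl4 : 4 ≤ l) (hk1 : 1 < k) (hk2 : k < n - 1)
    (hm1 : 1 < m) (hm2 : m < l - 1)
    (f : {A : Finset (Fin l) // A.card = m} → {S : Submodule K V // finrank K S = k})
    (hf : ∀ A B, (GrassmannGraph K V k).dist (f A) (f B) = (JohnsonGraph l m).dist A B)
    (C : Set {S : Submodule K V // finrank K S = k})
    (hCsub : C ⊆ Set.range f)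
    (hC : (GrassmannGraph K V k).IsClique C)
    (hCmax : ∀ D, D ⊆ Set.range f → (GrassmannGraph K V k).IsClique D → C ⊆ D → C = D) :
    ∃! D : Set {S : Submodule K V // finrank K S = k},
      (GrassmannGraph K V k).IsClique D ∧
      (∀ E, (GrassmannGraph K V k).IsClique E → D ⊆ E → D = E) ∧
      C ⊆ D :=
  stmt12_general K V k l m hm1 hm2 f hf C hCsub hC hCmax
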